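/- arXiv:2301.08311 — 2 statements merged into one kernel-verified Lean document; each statement's English description precedes it below -/
import Mathlib

section
/- Let δ > 0 and p ∈ (1,∞). On the half-line [0,∞), the inclusion of the weighted Sobolev space W^{1,p,δ}([0,∞)) = {f ∈ W^{1,p}_loc : ∫ (|f|^p + |f'|^p) e^{pδs} ds < ∞} into the unweighted L^p([0,∞)) is a compact operator. -/
/-!
Hölder's inequality against the weight bounds `∫_a^b |v|` by `‖v e^{δs}‖_p ‖e^{-δs}‖_{L^q(a,b)}`,
which is both `O(e^{-δa})` and `O((b-a)^{1/q})`. Applied to `f` and `f'` together with the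
fundamental theorem of calculus, this makes a bounded sequence uniformly Hölder continuous and
pointwise dominated by `D e^{-δs}`. A pointwise Arzelà–Ascoli argument (extraction on a countable
dense set, extended everywhere by equicontinuity) gives a pointwise convergent subsequence, and
dominated convergence with the `L^p` majorant `D e^{-δs}` upgrades this to `L^p` convergence.
-/

open MeasureTheory Set Filter Topology

theorem Equicontinuous.cauchySeq_of_dense {X E : Type*} [TopologicalSpace X]
    [PseudoMetricSpace E] {F : ℕ → X → E} (hF : Equicontinuous F) {s : Set X} (hs : Dense s)
    (hc : ∀ y ∈ s, CauchySeq fun n => F n y) (x : X) : CauchySeq fun n => F n x := by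
  rw [Metric.cauchySeq_iff]
  intro ε hε
  obtain ⟨y, hys, hyx⟩ := hs.inter_nhds_nonempty
    ((Metric.equicontinuousAt_iff_right.1 (hF x)) (ε / 3) (by positivity))
  obtain ⟨N, hN⟩ := Metric.cauchySeq_iff.1 (hc y hys) (ε / 3) (by positivity)
  refine ⟨N, fun m hm n hn => ?_⟩
  calc dist (F m x) (F n x) ≤ dist (F m x) (F m y) + dist (F m y) (F n y) + dist (F n y) (F n x) :=
        dist_triangle4 _ _ _ _
    _ < ε / 3 + ε / 3 + ε / 3 := by
        gcongr
        · exact hyx m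
        · exact hN m hm n hn
        · rw [dist_comm]; exact hyx n
    _ = ε := by ring

theorem exists_subseq_tendsto_of_equicontinuous {X E : Type*} [TopologicalSpace X]
    [TopologicalSpace.SeparableSpace X] [PseudoMetricSpace E] [ProperSpace E]
    {F : ℕ → X → E} (hF : Equicontinuous F)
    (hb : ∀ x, Bornology.IsBounded (range fun n => F n x)) :
    ∃ φ : ℕ → ℕ, StrictMono φ ∧ ∃ g : X → E, ∀ x, Tendsto (fun n => F (φ n) x) atTop (𝓝 (g x)) := by
  obtain ⟨s, hsc, hsd⟩ := TopologicalSpace.exists_countable_dense X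
  have : Countable s := hsc.to_subtype
  have hK : IsCompact (univ.pi fun y : s => closure (range fun n => F n y)) :=
    isCompact_univ_pi fun y => (hb y).isCompact_closure
  obtain ⟨L, -, φ, hφ, hlim⟩ := hK.tendsto_subseq (x := fun n (y : s) => F n y)
    fun n => mem_univ_pi.2 fun y => subset_closure (mem_range_self n)
  have hcauchy : ∀ x, CauchySeq fun n => F (φ n) x :=
    (hF.comp φ).cauchySeq_of_dense hsd fun y hy => (tendsto_pi_nhds.1 hlim ⟨y, hy⟩).cauchySeq
  choose g hg using fun x => cauchySeq_tendsto_of_complete (hcauchy x)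
  exact ⟨φ, hφ, g, hg⟩

open scoped ENNReal in
theorem tendsto_eLpNorm_sub_of_dominated {α E : Type*} [MeasurableSpace α] {μ : Measure α}
    [NormedAddCommGroup E] {p : ℝ≥0∞} (hp : p ≠ ∞) {F : ℕ → α → E} {g : α → E} {h : α → ℝ}
    (hF : ∀ n, AEStronglyMeasurable (F n) μ) (hh : MemLp h p μ)
    (hbound : ∀ n, ∀ᵐ x ∂μ, ‖F n x‖ ≤ h x)
    (hlim : ∀ᵐ x ∂μ, Tendsto (fun n => F n x) atTop (𝓝 (g x))) :
    MemLp g p μ ∧ Tendsto (fun n => eLpNorm (F n - g) p μ) atTop (𝓝 0) := by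
  have hg : AEStronglyMeasurable g μ := aestronglyMeasurable_of_tendsto_ae atTop hF hlim
  have hg_bound : ∀ᵐ x ∂μ, ‖g x‖ ≤ h x := by
    filter_upwards [hlim, ae_all_iff.2 hbound] with x hx hb
    exact le_of_tendsto' hx.norm hb
  refine ⟨hh.of_le hg (hg_bound.mono fun x hx => hx.trans (Real.le_norm_self _)), ?_⟩
  rcases eq_or_ne p 0 with rfl | hp0
  · simp
  simp_rw [eLpNorm_eq_lintegral_rpow_enorm_toReal hp0 hp]
  have hp_pos : 0 < p.toReal := ENNReal.toReal_pos hp0 hp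
  have hdct : Tendsto (fun n => ∫⁻ x, ‖(F n - g) x‖ₑ ^ p.toReal ∂μ) atTop (𝓝 (∫⁻ _, 0 ∂μ)) := by
    refine tendsto_lintegral_of_dominated_convergence' (fun x => ‖2 * h x‖ₑ ^ p.toReal)
      (fun n => ((hF n).sub hg).enorm.pow_const _) (fun n => ?_)
      (lintegral_rpow_enorm_lt_top_of_eLpNorm_lt_top hp0 hp (hh.const_mul 2).eLpNorm_lt_top).ne ?_
    · filter_upwards [hbound n, hg_bound] with x hFx hgx
      gcongr
      rw [enorm_le_iff_norm_le, Pi.sub_apply]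
      calc ‖F n x - g x‖ ≤ ‖F n x‖ + ‖g x‖ := norm_sub_le _ _
        _ ≤ 2 * h x := by linarith
        _ ≤ ‖2 * h x‖ := Real.le_norm_self _
    · filter_upwards [hlim] with x hx
      have h0 : Tendsto (fun n => ‖F n x - g x‖ₑ) atTop (𝓝 0) := by
        simpa using (hx.sub_const (g x)).enorm
      simpa [Function.comp_def, ENNReal.zero_rpow_of_pos hp_pos] using
        ((ENNReal.continuous_rpow_const (y := p.toReal)).tendsto 0).comp h0
  rw [lintegral_zero] at hdct
  simpa [Function.comp_def, ENNReal.zero_rpow_of_pos (inv_pos.2 hp_pos)] using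
    ((ENNReal.continuous_rpow_const (y := p.toReal⁻¹)).tendsto 0).comp hdct

section WeightedHolder

variable {p q δ : ℝ} {v : ℝ → ℝ} {s : Set ℝ}

theorem mul_exp_rpow {a : ℝ} (ha : 0 ≤ a) (p δ x : ℝ) :
    (a * Real.exp (δ * x)) ^ p = a ^ p * Real.exp (p * δ * x) := by
  rw [Real.mul_rpow ha (Real.exp_pos _).le, ← Real.exp_mul]
  ring_nf

theorem mul_exp_mul_exp_neg (a δ x : ℝ) : a * Real.exp (δ * x) * Real.exp (-δ * x) = a := by
  rw [mul_assoc, ← Real.exp_add, neg_mul, add_neg_cancel, Real.exp_zero, mul_one]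

theorem memLp_mul_exp (hp : 0 < p) (hv0 : ∀ x, 0 ≤ v x) (hv : Measurable v)
    (hint : IntegrableOn (fun x => v x ^ p * Real.exp (p * δ * x)) s) :
    MemLp (fun x => v x * Real.exp (δ * x)) (ENNReal.ofReal p) (volume.restrict s) := by
  have hmeas : AEStronglyMeasurable (fun x => v x * Real.exp (δ * x)) (volume.restrict s) := by
    fun_prop
  rw [← integrable_norm_rpow_iff hmeas (by simpa using hp) ENNReal.ofReal_ne_top,
    ENNReal.toReal_ofReal hp.le]
  refine hint.congr (Eventually.of_forall fun x => ?_)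
  dsimp only
  rw [Real.norm_of_nonneg (mul_nonneg (hv0 x) (Real.exp_pos _).le), mul_exp_rpow (hv0 x)]

theorem memLp_exp (hp : 0 < p) (hint : IntegrableOn (fun x => Real.exp (p * δ * x)) s) :
    MemLp (fun x => Real.exp (δ * x)) (ENNReal.ofReal p) (volume.restrict s) := by
  simpa using
    memLp_mul_exp (v := 1) hp (fun _ => zero_le_one) measurable_const (by simpa using hint)

theorem integrableOn_of_weighted (hpq : p.HolderConjugate q) (hv0 : ∀ x, 0 ≤ v x)
    (hv : Measurable v)
    (hint : IntegrableOn (fun x => v x ^ p * Real.exp (p * δ * x)) s)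
    (hexp : IntegrableOn (fun x => Real.exp (q * -δ * x)) s) :
    IntegrableOn v s := by
  have := hpq.ennrealOfReal
  exact ((memLp_mul_exp hpq.pos hv0 hv hint).integrable_mul (memLp_exp hpq.symm.pos hexp)).congr
    (Eventually.of_forall fun x => mul_exp_mul_exp_neg _ _ _)

theorem setIntegral_le_weighted (hpq : p.HolderConjugate q) (hv0 : ∀ x, 0 ≤ v x)
    (hv : Measurable v)
    (hint : IntegrableOn (fun x => v x ^ p * Real.exp (p * δ * x)) s)
    (hexp : IntegrableOn (fun x => Real.exp (q * -δ * x)) s) :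
    ∫ x in s, v x ≤ (∫ x in s, v x ^ p * Real.exp (p * δ * x)) ^ (1 / p) *
      (∫ x in s, Real.exp (q * -δ * x)) ^ (1 / q) := by
  have key := integral_mul_le_Lp_mul_Lq_of_nonneg hpq
    (Eventually.of_forall fun x => mul_nonneg (hv0 x) (Real.exp_pos _).le)
    (Eventually.of_forall fun x => (Real.exp_pos _).le)
    (memLp_mul_exp hpq.pos hv0 hv hint) (memLp_exp hpq.symm.pos hexp)
  simp only [mul_exp_mul_exp_neg, mul_exp_rpow (hv0 _), ← Real.exp_mul, mul_comm _ q] at key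
  simpa only [mul_assoc] using key

end WeightedHolder

theorem integral_Ioc_exp_le_exp {c : ℝ} (hc : c < 0) (a b : ℝ) :
    ∫ x in Ioc a b, Real.exp (c * x) ≤ (-c)⁻¹ * Real.exp (c * a) := by
  calc ∫ x in Ioc a b, Real.exp (c * x) ≤ ∫ x in Ioi a, Real.exp (c * x) :=
        setIntegral_mono_set (by simpa using exp_neg_integrableOn_Ioi a (neg_pos.2 hc))
          (Eventually.of_forall fun x => (Real.exp_pos _).le) Ioc_subset_Ioi_self.eventuallyLE
    _ = (-c)⁻¹ * Real.exp (c * a) := by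
        rw [integral_exp_mul_Ioi hc]; field_simp

theorem integral_Ioc_exp_le_sub {c a b : ℝ} (hc : c ≤ 0) (ha : 0 ≤ a) (hab : a ≤ b) :
    ∫ x in Ioc a b, Real.exp (c * x) ≤ b - a := by
  calc ∫ x in Ioc a b, Real.exp (c * x) ≤ ∫ _ in Ioc a b, (1 : ℝ) :=
        setIntegral_mono_on (by fun_prop : Continuous fun x => Real.exp (c * x)).integrableOn_Ioc
          (integrableOn_const measure_Ioc_lt_top.ne) measurableSet_Ioc fun x hx =>
            Real.exp_le_one_iff.2 (mul_nonpos_of_nonpos_of_nonneg hc (ha.trans hx.1.le))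
    _ = b - a := by simp [hab]

def WeightedEnergyLE (p δ C : ℝ) (v : ℝ → ℝ) : Prop :=
  IntegrableOn (fun x => v x ^ p * Real.exp (p * δ * x)) (Ioi 0) ∧
    ∫ x in Ioi 0, v x ^ p * Real.exp (p * δ * x) ≤ C

namespace WeightedEnergyLE

variable {p q δ C : ℝ} {v : ℝ → ℝ} {a b : ℝ}

theorem of_le {w : ℝ → ℝ} (hv0 : ∀ x, 0 ≤ v x) (hv : Measurable v)
    (hle : ∀ x, v x ^ p * Real.exp (p * δ * x) ≤ w x) (hw : IntegrableOn w (Ioi 0))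
    (hC : ∫ x in Ioi 0, w x ≤ C) :
    WeightedEnergyLE p δ C v := by
  have hint : IntegrableOn (fun x => v x ^ p * Real.exp (p * δ * x)) (Ioi 0) :=
    hw.mono' (by fun_prop) (Eventually.of_forall fun x => by
      rw [Real.norm_of_nonneg (by have := hv0 x; positivity)]; exact hle x)
  exact ⟨hint, (integral_mono hint hw hle).trans hC⟩

theorem nonneg (h : WeightedEnergyLE p δ C v) (hv0 : ∀ x, 0 ≤ v x) : 0 ≤ C :=
  (integral_nonneg fun x => by have := hv0 x; positivity).trans h.2

theorem integrableOn_Ioc (h : WeightedEnergyLE p δ C v) (hpq : p.HolderConjugate q)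
    (hv0 : ∀ x, 0 ≤ v x) (hv : Measurable v) (ha : 0 ≤ a) : IntegrableOn v (Ioc a b) :=
  integrableOn_of_weighted hpq hv0 hv (h.1.mono_set fun _ hx => ha.trans_lt hx.1)
    (by fun_prop : Continuous fun x => Real.exp (q * -δ * x)).integrableOn_Ioc

theorem integral_Ioc_le (h : WeightedEnergyLE p δ C v) (hpq : p.HolderConjugate q)
    (hv0 : ∀ x, 0 ≤ v x) (hv : Measurable v) (ha : 0 ≤ a) :
    ∫ x in Ioc a b, v x ≤ C ^ (1 / p) * (∫ x in Ioc a b, Real.exp (q * -δ * x)) ^ (1 / q) := by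
  have hsub : Ioc a b ⊆ Ioi 0 := fun _ hx => ha.trans_lt hx.1
  refine (setIntegral_le_weighted hpq hv0 hv (h.1.mono_set hsub)
    (by fun_prop : Continuous fun x => Real.exp (q * -δ * x)).integrableOn_Ioc).trans ?_
  refine mul_le_mul_of_nonneg_right (Real.rpow_le_rpow
    (integral_nonneg fun x => by have := hv0 x; positivity) ?_ (one_div_nonneg.2 hpq.pos.le))
    (Real.rpow_nonneg (integral_nonneg fun x => (Real.exp_pos _).le) _)
  exact (setIntegral_mono_set h.1 (Eventually.of_forall fun x => by have := hv0 x; positivity)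
    hsub.eventuallyLE).trans h.2

theorem integral_Ioc_le_exp (h : WeightedEnergyLE p δ C v) (hpq : p.HolderConjugate q)
    (hδ : 0 < δ) (hv0 : ∀ x, 0 ≤ v x) (hv : Measurable v) (ha : 0 ≤ a) :
    ∫ x in Ioc a b, v x ≤ C ^ (1 / p) * (q * δ)⁻¹ ^ (1 / q) * Real.exp (-δ * a) := by
  have hq := hpq.symm.pos
  calc ∫ x in Ioc a b, v x
      ≤ C ^ (1 / p) * ((q * δ)⁻¹ * Real.exp (q * -δ * a)) ^ (1 / q) := by
        refine (h.integral_Ioc_le hpq hv0 hv ha).trans ?_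
        have := h.nonneg hv0
        refine mul_le_mul_of_nonneg_left (Real.rpow_le_rpow
          (integral_nonneg fun x => (Real.exp_pos _).le) ?_ (by positivity)) (by positivity)
        simpa using integral_Ioc_exp_le_exp (c := q * -δ) (by nlinarith) a b
    _ = C ^ (1 / p) * (q * δ)⁻¹ ^ (1 / q) * Real.exp (-δ * a) := by
        rw [Real.mul_rpow (by positivity) (Real.exp_pos _).le, ← Real.exp_mul, mul_assoc]
        field_simp

theorem integral_Ioc_le_rpow (h : WeightedEnergyLE p δ C v) (hpq : p.HolderConjugate q)
    (hδ : 0 ≤ δ) (hv0 : ∀ x, 0 ≤ v x) (hv : Measurable v) (ha : 0 ≤ a) (hab : a ≤ b) :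
    ∫ x in Ioc a b, v x ≤ C ^ (1 / p) * (b - a) ^ (1 / q) := by
  refine (h.integral_Ioc_le hpq hv0 hv ha).trans ?_
  have := h.nonneg hv0
  have hq := hpq.symm.pos
  refine mul_le_mul_of_nonneg_left (Real.rpow_le_rpow
    (integral_nonneg fun x => (Real.exp_pos _).le) ?_ (by positivity)) (by positivity)
  exact integral_Ioc_exp_le_sub (by nlinarith) ha hab

end WeightedEnergyLE

section FundamentalTheorem

variable {E : Type*} [NormedAddCommGroup E] [NormedSpace ℝ E] [CompleteSpace E] {u : ℝ → E}
  {a b : ℝ}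

theorem norm_sub_le_integral_norm_deriv (hu : Differentiable ℝ u) (hab : a ≤ b)
    (hi : IntegrableOn (fun x => ‖deriv u x‖) (Ioc a b)) :
    ‖u b - u a‖ ≤ ∫ x in Ioc a b, ‖deriv u x‖ := by
  have hii : IntervalIntegrable (deriv u) volume a b := by
    rw [intervalIntegrable_iff_integrableOn_Ioc_of_le hab]
    exact (integrable_norm_iff (aestronglyMeasurable_deriv u _)).1 hi
  rw [← intervalIntegral.integral_deriv_eq_sub (fun x _ => hu x) hii,
    ← intervalIntegral.integral_of_le hab]
  exact intervalIntegral.norm_integral_le_integral_norm hab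

theorem norm_le_integral_norm_add_integral_norm_deriv (hu : Differentiable ℝ u)
    (hf : IntegrableOn (fun x => ‖u x‖) (Ioc a (a + 1)))
    (hd : IntegrableOn (fun x => ‖deriv u x‖) (Ioc a (a + 1))) :
    ‖u a‖ ≤ (∫ x in Ioc a (a + 1), ‖u x‖) + ∫ x in Ioc a (a + 1), ‖deriv u x‖ := by
  set I := ∫ x in Ioc a (a + 1), ‖deriv u x‖
  have hpoint : ∀ t ∈ Ioc a (a + 1), ‖u a‖ ≤ ‖u t‖ + I := fun t ht =>
    calc ‖u a‖ ≤ ‖u t‖ + ‖u t - u a‖ := norm_le_insert _ _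
      _ ≤ ‖u t‖ + ∫ x in Ioc a t, ‖deriv u x‖ := by
          gcongr
          exact norm_sub_le_integral_norm_deriv hu ht.1.le
            (hd.mono_set (Ioc_subset_Ioc_right ht.2))
      _ ≤ ‖u t‖ + I := by
          gcongr
          exact setIntegral_mono_set hd (Eventually.of_forall fun _ => norm_nonneg _)
            (Ioc_subset_Ioc_right ht.2).eventuallyLE
  have hconst : IntegrableOn (fun _ => I) (Ioc a (a + 1)) :=
    integrableOn_const measure_Ioc_lt_top.ne
  calc ‖u a‖ = ∫ _ in Ioc a (a + 1), ‖u a‖ := by simp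
    _ ≤ ∫ t in Ioc a (a + 1), (‖u t‖ + I) :=
        setIntegral_mono_on (integrableOn_const measure_Ioc_lt_top.ne) (hf.add hconst)
          measurableSet_Ioc hpoint
    _ = (∫ x in Ioc a (a + 1), ‖u x‖) + I := by
        rw [integral_add hf hconst]
        simp

end FundamentalTheorem

section WeightedSobolev

variable {p q δ C : ℝ} {u : ℝ → ℂ} {a b : ℝ}

theorem norm_le_exp_of_weightedEnergyLE (hu : Differentiable ℝ u)
    (hf : WeightedEnergyLE p δ C (‖u ·‖)) (hd : WeightedEnergyLE p δ C (‖deriv u ·‖))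
    (hpq : p.HolderConjugate q) (hδ : 0 < δ) (ha : 0 ≤ a) :
    ‖u a‖ ≤ 2 * (C ^ (1 / p) * (q * δ)⁻¹ ^ (1 / q)) * Real.exp (-δ * a) := by
  have hfm : Measurable (‖u ·‖) := hu.continuous.measurable.norm
  have hdm : Measurable (‖deriv u ·‖) := (measurable_deriv u).norm
  have hf0 : ∀ x, 0 ≤ ‖u x‖ := fun _ => norm_nonneg _
  have hd0 : ∀ x, 0 ≤ ‖deriv u x‖ := fun _ => norm_nonneg _
  calc ‖u a‖ ≤ (∫ x in Ioc a (a + 1), ‖u x‖) + ∫ x in Ioc a (a + 1), ‖deriv u x‖ :=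
        norm_le_integral_norm_add_integral_norm_deriv hu (hf.integrableOn_Ioc hpq hf0 hfm ha)
          (hd.integrableOn_Ioc hpq hd0 hdm ha)
    _ ≤ C ^ (1 / p) * (q * δ)⁻¹ ^ (1 / q) * Real.exp (-δ * a) +
          C ^ (1 / p) * (q * δ)⁻¹ ^ (1 / q) * Real.exp (-δ * a) :=
        add_le_add (hf.integral_Ioc_le_exp hpq hδ hf0 hfm ha)
          (hd.integral_Ioc_le_exp hpq hδ hd0 hdm ha)
    _ = 2 * (C ^ (1 / p) * (q * δ)⁻¹ ^ (1 / q)) * Real.exp (-δ * a) := by ring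

theorem norm_sub_le_of_weightedEnergyLE (hu : Differentiable ℝ u)
    (hd : WeightedEnergyLE p δ C (‖deriv u ·‖)) (hpq : p.HolderConjugate q) (hδ : 0 ≤ δ)
    (ha : 0 ≤ a) (hab : a ≤ b) :
    ‖u b - u a‖ ≤ C ^ (1 / p) * (b - a) ^ (1 / q) := by
  have hdm : Measurable (‖deriv u ·‖) := (measurable_deriv u).norm
  have hd0 : ∀ x, 0 ≤ ‖deriv u x‖ := fun _ => norm_nonneg _
  exact (norm_sub_le_integral_norm_deriv hu hab (hd.integrableOn_Ioc hpq hd0 hdm ha)).trans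
    (hd.integral_Ioc_le_rpow hpq hδ hd0 hdm ha hab)

theorem weightedEnergyLE_norm_and_norm_deriv (hu : Continuous u)
    (hint : IntegrableOn (fun x => (‖u x‖ ^ p + ‖deriv u x‖ ^ p) * Real.exp (p * δ * x)) (Ioi 0))
    (hC : ∫ x in Ioi 0, (‖u x‖ ^ p + ‖deriv u x‖ ^ p) * Real.exp (p * δ * x) ≤ C) :
    WeightedEnergyLE p δ C (‖u ·‖) ∧ WeightedEnergyLE p δ C (‖deriv u ·‖) :=
  ⟨.of_le (fun _ => norm_nonneg _) hu.measurable.norm (fun x => mul_le_mul_of_nonneg_right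
      (le_add_of_nonneg_right (by positivity)) (Real.exp_pos _).le) hint hC,
    .of_le (fun _ => norm_nonneg _) (measurable_deriv _).norm (fun x => mul_le_mul_of_nonneg_right
      (le_add_of_nonneg_left (by positivity)) (Real.exp_pos _).le) hint hC⟩

end WeightedSobolev

theorem dist_comp_max_le {E : Type*} [SeminormedAddCommGroup E] {u : ℝ → E} {K r : ℝ}
    (hK : 0 ≤ K) (hr : 0 ≤ r)
    (h : ∀ a b, 0 ≤ a → a ≤ b → ‖u b - u a‖ ≤ K * (b - a) ^ r) (x y : ℝ) :
    dist (u (max x 0)) (u (max y 0)) ≤ K * dist x y ^ r := by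
  have hmax : |max x 0 - max y 0| ≤ dist x y := abs_max_sub_max_le_abs x y 0
  rcases le_total (max x 0) (max y 0) with hxy | hxy
  · rw [dist_comm, dist_eq_norm]
    refine (h _ _ (le_max_right _ _) hxy).trans ?_
    gcongr
    rw [abs_sub_comm] at hmax
    exact (le_abs_self _).trans hmax
  · rw [dist_eq_norm]
    refine (h _ _ (le_max_right _ _) hxy).trans ?_
    gcongr
    exact (le_abs_self _).trans hmax

theorem equicontinuous_comp_max {ι E : Type*} [SeminormedAddCommGroup E] {F : ι → ℝ → E}
    {K r : ℝ} (hK : 0 ≤ K) (hr : 0 < r)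
    (h : ∀ i a b, 0 ≤ a → a ≤ b → ‖F i b - F i a‖ ≤ K * (b - a) ^ r) :
    Equicontinuous fun i x => F i (max x 0) := by
  refine Metric.equicontinuous_of_continuity_modulus (fun t => K * t ^ r) ?_ _
    fun x y i => dist_comp_max_le hK hr.le (h i) x y
  have hcont : Continuous fun t : ℝ => K * t ^ r :=
    continuous_const.mul (Real.continuous_rpow_const hr.le)
  simpa [Real.zero_rpow hr.ne'] using hcont.tendsto 0

/-- **Compactness of the inclusion `W^{1,p,δ}([0,∞)) ↪ L^p([0,∞))` for `δ > 0`.**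
Every sequence bounded in the weighted Sobolev norm has a subsequence converging
in the unweighted `L^p` norm on `(0,∞)`. -/
theorem weighted_sobolev_compact_embedding
    (p δ : ℝ) (hp : 1 < p) (hδ : 0 < δ) (C : ℝ)
    (f : ℕ → ℝ → ℂ)
    (hdiff : ∀ k, Differentiable ℝ (f k))
    (hint : ∀ k, IntegrableOn
      (fun s => (‖f k s‖ ^ p + ‖deriv (f k) s‖ ^ p) * Real.exp (p * δ * s))
      (Set.Ioi (0 : ℝ)) volume)
    (hbdd : ∀ k, ∫ s in Set.Ioi (0 : ℝ),
      (‖f k s‖ ^ p + ‖deriv (f k) s‖ ^ p) * Real.exp (p * δ * s) ≤ C) :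
    ∃ φ : ℕ → ℕ, StrictMono φ ∧ ∃ g : ℝ → ℂ,
      MemLp g (ENNReal.ofReal p) (volume.restrict (Set.Ioi (0 : ℝ))) ∧
      Filter.Tendsto
        (fun k => eLpNorm (f (φ k) - g) (ENNReal.ofReal p)
          (volume.restrict (Set.Ioi (0 : ℝ))))
        Filter.atTop (nhds 0) := by
  obtain ⟨q, hpq⟩ : ∃ q, p.HolderConjugate q := ⟨_, .conjExponent hp⟩
  have henergy k :=
    weightedEnergyLE_norm_and_norm_deriv (hdiff k).continuous (hint k) (hbdd k)
  have hC : 0 ≤ C := (henergy 0).1.nonneg fun _ => norm_nonneg _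
  set D := 2 * (C ^ (1 / p) * (q * δ)⁻¹ ^ (1 / q))
  have hdecay : ∀ k x, 0 ≤ x → ‖f k x‖ ≤ D * Real.exp (-δ * x) := fun k x hx =>
    norm_le_exp_of_weightedEnergyLE (hdiff k) (henergy k).1 (henergy k).2 hpq hδ hx
  -- Extending each `f k` by `f k 0` on `(-∞, 0]` keeps both bounds and avoids the subtype `[0, ∞)`.
  have hequi : Equicontinuous fun k x => f k (max x 0) :=
    equicontinuous_comp_max (by positivity) (one_div_pos.2 hpq.symm.pos) fun k _ _ =>
      norm_sub_le_of_weightedEnergyLE (hdiff k) (henergy k).2 hpq hδ.le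
  have hbounded : ∀ x, Bornology.IsBounded (range fun k => f k (max x 0)) := fun x =>
    isBounded_iff_forall_norm_le.2 ⟨D, by
      rintro _ ⟨k, rfl⟩
      exact (hdecay k _ (le_max_right _ _)).trans (mul_le_of_le_one_right
        (by have := hpq.symm.pos; positivity)
        (Real.exp_le_one_iff.2 (by nlinarith [le_max_right x 0])))⟩
  obtain ⟨φ, hφ, g, hg⟩ := exists_subseq_tendsto_of_equicontinuous hequi hbounded
  have hmajorant := (memLp_exp (s := Ioi 0) (δ := -δ) hpq.pos
    (by simpa using exp_neg_integrableOn_Ioi 0 (by positivity : 0 < p * δ))).const_mul D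
  refine ⟨φ, hφ, g, tendsto_eLpNorm_sub_of_dominated ENNReal.ofReal_ne_top
    (fun _ => (hdiff _).continuous.aestronglyMeasurable) hmajorant
    (fun _ => (ae_restrict_mem measurableSet_Ioi).mono fun x hx => hdecay _ x (mem_Ioi.1 hx).le) ?_⟩
  filter_upwards [ae_restrict_mem measurableSet_Ioi] with x hx
  simpa [max_eq_left (mem_Ioi.1 hx).le] using hg x
end

section
/- Let A be a closed, densely defined operator of the form D = ∂_s + A on L²(ℝ, H) where A is self-adjoint on the Hilbert space H with spectrum contained in ℝ \ (−ε, ε) for some ε > 0. Then for every x in the domain, ‖x‖_{L²(ℝ,H)} ≤ (1/ε)‖Dx‖_{L²(ℝ,H)}. -/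
/-!
Since `A` is self-adjoint, `‖A⁻¹‖` equals the spectral radius of `A⁻¹`, which the gap bounds by
`1/ε`; hence `ε ‖v‖ ≤ ‖A v‖` pointwise. On the other hand `s ↦ ⟪x s, A (x s)⟫` is integrable with
integrable derivative `2 ⟪x' s, A (x s)⟫`, so that derivative integrates to zero: `x'` and `A x`
are orthogonal in `L²`, and Pythagoras gives `ε ‖x‖ ≤ ‖A x‖ ≤ ‖x' + A x‖`.
-/

open MeasureTheory
open scoped RealInnerProductSpace

section L2

variable {α E : Type*} [MeasurableSpace α] {μ : Measure α}
  [NormedAddCommGroup E] [InnerProductSpace ℝ E]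

theorem MeasureTheory.MemLp.integrable_inner {f g : α → E} (hf : MemLp f 2 μ)
    (hg : MemLp g 2 μ) : Integrable (fun a => ⟪f a, g a⟫) μ := by
  refine (L2.integrable_inner (hf.toLp f) (hg.toLp g)).congr ?_
  filter_upwards [hf.coeFn_toLp, hg.coeFn_toLp] with a hfa hga
  rw [hfa, hga]

theorem MeasureTheory.eLpNorm_le_eLpNorm_add_of_integral_inner_eq_zero {f g : α → E}
    (hf : MemLp f 2 μ) (hg : MemLp g 2 μ) (horth : ∫ a, ⟪f a, g a⟫ ∂μ = 0) :
    eLpNorm g 2 μ ≤ eLpNorm (f + g) 2 μ := by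
  set F := hf.toLp f
  set G := hg.toLp g
  have hFG : ⟪F, G⟫ = 0 := by
    rw [L2.inner_def, ← horth]
    refine integral_congr_ae ?_
    filter_upwards [hf.coeFn_toLp, hg.coeFn_toLp] with a hfa hga
    rw [hfa, hga]
  have hG : ‖G‖ ≤ ‖F + G‖ := by
    rw [← sq_le_sq₀ (norm_nonneg _) (norm_nonneg _), norm_add_sq_real, hFG]
    linarith [sq_nonneg ‖F‖]
  rw [← MemLp.toLp_add, Lp.norm_toLp, Lp.norm_toLp] at hG
  exact (ENNReal.toReal_le_toReal hg.eLpNorm_ne_top (hf.add hg).eLpNorm_ne_top).mp hG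

end L2

section Operator

variable {E : Type*} [NormedAddCommGroup E] [InnerProductSpace ℝ E]

theorem integral_inner_deriv_apply_eq_zero {T : E →L[ℝ] E} (hT : (T : E →ₗ[ℝ] E).IsSymmetric)
    {x : ℝ → E} (hd : Differentiable ℝ x) (hx : MemLp x 2 volume)
    (hx' : MemLp (deriv x) 2 volume) : ∫ s, ⟪deriv x s, T (x s)⟫ = 0 := by
  have hTx : MemLp (fun s => T (x s)) 2 volume := T.comp_memLp' hx
  have hderiv (s : ℝ) :
      HasDerivAt (fun t => ⟪x t, T (x t)⟫) (2 * ⟪deriv x s, T (x s)⟫) s := by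
    have hxs := (hd s).hasDerivAt
    refine (hxs.inner ℝ (T.hasFDerivAt.comp_hasDerivAt s hxs)).congr_deriv ?_
    have hsymm : ⟪x s, T (deriv x s)⟫ = ⟪deriv x s, T (x s)⟫ := by
      rw [← T.coe_coe, ← hT, real_inner_comm, T.coe_coe]
    rw [Function.comp_apply, hsymm, two_mul]
  have := integral_eq_zero_of_hasDerivAt_of_integrable hderiv
    ((hx'.integrable_inner hTx).const_mul 2) (hx.integrable_inner hTx)
  rwa [integral_const_mul, mul_eq_zero, or_iff_right two_ne_zero] at this

theorem IsSelfAdjoint.mul_norm_le_norm_apply [CompleteSpace E] {T : E →L[ℝ] E}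
    (hT : IsSelfAdjoint T) {ε : ℝ} (hε : 0 < ε) (hgap : ∀ μ ∈ spectrum ℝ T, ε ≤ |μ|) (v : E) :
    ε * ‖v‖ ≤ ‖T v‖ := by
  obtain ⟨u, rfl⟩ : IsUnit T :=
    (spectrum.zero_notMem_iff ℝ).mp fun h => by simpa [hε.not_ge] using hgap 0 h
  have hinv : IsSelfAdjoint (↑u⁻¹ : E →L[ℝ] E) := by
    simpa only [Ring.inverse_unit] using hT.ringInverse
  have hspec : ∀ μ ∈ spectrum ℝ (↑u⁻¹ : E →L[ℝ] E), ‖μ‖₊ ≤ ε⁻¹.toNNReal := by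
    intro μ hμ
    rw [← spectrum.map_inv, Set.mem_inv] at hμ
    have hμε : ε ≤ |μ|⁻¹ := abs_inv μ ▸ hgap _ hμ
    rw [Real.le_toNNReal_iff_coe_le (by positivity), coe_nnnorm, Real.norm_eq_abs]
    exact (le_inv_comm₀ hε (inv_pos.mp (hε.trans_le hμε))).mp hμε
  have hnorm : ‖(↑u⁻¹ : E →L[ℝ] E)‖ ≤ ε⁻¹ := by
    have := (ContinuousLinearMap.spectralRadius_eq_nnnorm _ hinv).symm.trans_le
      (iSup₂_le fun μ hμ => ENNReal.coe_le_coe.mpr (hspec μ hμ))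
    exact (Real.le_toNNReal_iff_coe_le (by positivity)).mp (ENNReal.coe_le_coe.mp this)
  calc ε * ‖v‖ = ε * ‖(↑u⁻¹ : E →L[ℝ] E) ((u : E →L[ℝ] E) v)‖ := by
        rw [← mul_apply_eq_comp, Units.inv_mul, one_apply_eq_self]
    _ ≤ ε * (ε⁻¹ * ‖(u : E →L[ℝ] E) v‖) := by
        gcongr
        exact (ContinuousLinearMap.le_opNorm _ _).trans (by gcongr)
    _ = ‖(u : E →L[ℝ] E) v‖ := by field_simp

end Operator

/-- **Spectral-gap estimate for `D = ∂_s + A`.**  If `A` is self-adjoint with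
spectrum contained in `ℝ ∖ (−ε, ε)`, then `‖x‖_{L²(ℝ,H)} ≤ (1/ε) ‖x' + A x‖_{L²(ℝ,H)}`
for all `x` in the domain `W^{1,2}(ℝ,H)`. -/
theorem spectral_gap_estimate_dds_add_A
    {H : Type*} [NormedAddCommGroup H] [InnerProductSpace ℝ H] [CompleteSpace H]
    (A : H →L[ℝ] H) (hA : IsSelfAdjoint A) (ε : ℝ) (hε : 0 < ε)
    (hspec : spectrum ℝ A ∩ Set.Ioo (-ε) ε = ∅) :
    ∀ x : ℝ → H, Differentiable ℝ x → MemLp x 2 volume →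
      MemLp (deriv x) 2 volume →
      eLpNorm x 2 volume ≤
        ENNReal.ofReal (1 / ε) *
          eLpNorm (fun s => deriv x s + A (x s)) 2 volume := by
  intro x hd hx hx'
  have hgap : ∀ μ ∈ spectrum ℝ A, ε ≤ |μ| := fun μ hμ => not_lt.mp fun hlt =>
    (Set.eq_empty_iff_forall_notMem.mp hspec) μ ⟨hμ, abs_lt.mp hlt⟩
  have hcoercive :
      ENNReal.ofReal ε * eLpNorm x 2 volume ≤ eLpNorm (fun s => A (x s)) 2 volume := by
    rw [← Real.enorm_of_nonneg hε.le, ← eLpNorm_const_smul]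
    refine eLpNorm_mono fun s => ?_
    rw [Pi.smul_apply, norm_smul, Real.norm_of_nonneg hε.le]
    exact hA.mul_norm_le_norm_apply hε hgap (x s)
  have horth := eLpNorm_le_eLpNorm_add_of_integral_inner_eq_zero hx' (A.comp_memLp' hx)
    (integral_inner_deriv_apply_eq_zero hA.isSymmetric hd hx hx')
  calc eLpNorm x 2 volume
        = ENNReal.ofReal (1 / ε) * (ENNReal.ofReal ε * eLpNorm x 2 volume) := by
        rw [← mul_assoc, ← ENNReal.ofReal_mul (by positivity), one_div_mul_cancel hε.ne',
          ENNReal.ofReal_one, one_mul]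
    _ ≤ ENNReal.ofReal (1 / ε) * eLpNorm (fun s => deriv x s + A (x s)) 2 volume := by
        gcongr
        exact hcoercive.trans horth
end
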